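/- (BCH bound for the full designed-distance case) Let n = 2^m - 1, let α be a primitive element of F_{2^m}, and let C be the cyclic code of length n over F_2 consisting of all polynomials c(x) of degree < n with c(α^i) = 0 for i = 1, ..., δ-1, where 2 ≤ δ ≤ n. Then every nonzero codeword of C has Hamming weight at least δ. -/
import Mathlib


open Polynomial

/-- BCH bound: every nonzero codeword of the narrow-sense primitive BCH code of
designed distance `δ` (the polynomials `c` of degree `< n` with
`c(α^i) = 0` for `i = 1, …, δ-1`) has Hamming weight (number of nonzero
coefficients) at least `δ`. -/
theorem bch_bound (m n δ : ℕ) (hm : 1 ≤ m) (hn : n = 2 ^ m - 1)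
    (hδ₁ : 2 ≤ δ) (hδ₂ : δ ≤ n)
    (F : Type*) [Field F] [Fintype F] [Algebra (ZMod 2) F]
    (hF : Fintype.card F = 2 ^ m)
    (α : F) (hα : orderOf α = n)
    (c : Polynomial (ZMod 2)) (hc_deg : c.natDegree < n)
    (hc_root : ∀ i : ℕ, 1 ≤ i → i ≤ δ - 1 → aeval (α ^ i) c = 0)
    (hc_ne : c ≠ 0) :
    δ ≤ c.support.card := by
  by_contra h
  push_neg at h
  -- basic facts
  have hn1 : 1 ≤ n := by omega
  have hαn : α ^ n = 1 := by rw [← hα]; exact pow_orderOf_eq_one α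
  have hα0 : α ≠ 0 := by
    intro h0
    rw [h0, zero_pow (by omega)] at hαn
    exact zero_ne_one hαn
  have hαu : IsUnit α := hα0.isUnit
  obtain ⟨u, hu⟩ := hαu
  set w := c.support.card with hw
  have hw1 : 1 ≤ w := by
    rcases Finset.card_pos.2 (Polynomial.nonempty_support_iff.2 hc_ne) with h'
    omega
  have hwδ : w ≤ δ - 1 := by omega
  -- enumerate the support
  let e : Fin w ≃ {x // x ∈ c.support} := c.support.equivFin.symm
  let j : Fin w → ℕ := fun k => (e k : ℕ)
  have hj_mem : ∀ k, j k ∈ c.support := fun k => (e k).2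
  have hj_lt : ∀ k, j k < n := by
    intro k
    exact lt_of_le_of_lt (Polynomial.le_natDegree_of_mem_supp _ (hj_mem k)) hc_deg
  have hj_inj : Function.Injective j := by
    intro a b hab
    exact e.injective (Subtype.ext hab)
  let x : Fin w → F := fun k => α ^ j k
  have hx_inj : Function.Injective x := by
    intro a b hab
    apply hj_inj
    have hou : orderOf u = n := by rw [← orderOf_units, hu, hα]
    have huab : u ^ j a = u ^ j b := by
      apply Units.ext
      simpa [hu] using hab
    exact pow_injOn_Iio_orderOf (x := u)
      (by rw [Set.mem_Iio, hou]; exact hj_lt a)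
      (by rw [Set.mem_Iio, hou]; exact hj_lt b) huab
  have hx_ne : ∀ k, x k ≠ 0 := fun k => pow_ne_zero _ hα0
  -- the matrix and vector
  let M : Matrix (Fin w) (Fin w) F := Matrix.of fun i k => x k ^ (i.1 + 1)
  let v : Fin w → F := fun k => algebraMap (ZMod 2) F (c.coeff (j k))
  have hMv : M.mulVec v = 0 := by
    funext i
    have hi : (i.1 + 1) ≤ δ - 1 := le_trans (by omega) hwδ
    have := hc_root (i.1 + 1) (by omega) hi
    rw [Polynomial.aeval_def, Polynomial.eval₂_eq_sum, Polynomial.sum_def] at this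
    simp only [Matrix.mulVec, dotProduct, Pi.zero_apply]
    have key : ∀ k : Fin w, M i k * v k
        = (algebraMap (ZMod 2) F) (c.coeff (j k)) * (α ^ (i.1+1)) ^ (j k) := by
      intro k
      simp only [M, Matrix.of_apply, x, v]
      rw [mul_comm, ← pow_mul, ← pow_mul, Nat.mul_comm]
    calc ∑ k, M i k * v k
        = ∑ k : Fin w, (algebraMap (ZMod 2) F) (c.coeff (j k)) * (α ^ (i.1+1)) ^ (j k) :=
          Finset.sum_congr rfl fun k _ => key k
      _ = ∑ a : {y // y ∈ c.support},
            (algebraMap (ZMod 2) F) (c.coeff a) * (α ^ (i.1+1)) ^ (a : ℕ) :=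
          by exact Equiv.sum_comp e (fun a => (algebraMap (ZMod 2) F) (c.coeff (a:ℕ)) * (α ^ (i.1+1)) ^ (a:ℕ))
      _ = ∑ a ∈ c.support, (algebraMap (ZMod 2) F) (c.coeff a) * (α ^ (i.1+1)) ^ a :=
          by exact Finset.sum_coe_sort c.support (fun a => (algebraMap (ZMod 2) F) (c.coeff a) * (α ^ (i.1+1)) ^ a)
      _ = 0 := this
  have hdet : M.det ≠ 0 := by
    have hMT : M.transpose = Matrix.diagonal x * Matrix.vandermonde x := by
      ext k i
      simp [M, Matrix.vandermonde, Matrix.diagonal_mul, pow_succ, mul_comm]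
    have : M.det = (∏ k, x k) * ∏ i : Fin w, ∏ j ∈ Finset.Ioi i, (x j - x i) := by
      rw [← Matrix.det_transpose, hMT, Matrix.det_mul, Matrix.det_diagonal,
        Matrix.det_vandermonde]
    rw [this]
    apply mul_ne_zero
    · exact Finset.prod_ne_zero_iff.2 fun k _ => hx_ne k
    · apply Finset.prod_ne_zero_iff.2
      intro i _
      apply Finset.prod_ne_zero_iff.2
      intro k hk
      exact sub_ne_zero.2 fun hxe => (Finset.mem_Ioi.1 hk).ne' (hx_inj hxe)
  have hv0 : v = 0 := Matrix.eq_zero_of_mulVec_eq_zero hdet hMv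
  have k0 : Fin w := ⟨0, by omega⟩
  have hcj : c.coeff (j k0) ≠ 0 := Polynomial.mem_support_iff.1 (hj_mem k0)
  have hcj1 : c.coeff (j k0) = 1 := by
    have h2 : ∀ a : ZMod 2, a ≠ 0 → a = 1 := by decide
    exact h2 _ hcj
  have hv1 : v k0 = 1 := by simp [v, hcj1]
  rw [hv0] at hv1
  simp at hv1
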